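/- Let A and A' be 2-crossed modules of commutative algebras, f = (f₂,f₁,f₀): A → A' a 2-crossed module morphism, and (s,t) a quadratic f-derivation. Define g₀(r) = f₀(r) + ∂₁'(s(r)), g₁(e) = f₁(e) + s(∂₁(e)) + ∂₂'(t(e)), g₂(l) = f₂(l) + t(∂₂(l)). Then g = (g₂,g₁,g₀) is a 2-crossed module morphism A → A': each gᵢ is an algebra homomorphism, the diagram with ∂₁,∂₂,∂₁',∂₂' commutes, g₁(r▶e) = g₀(r)▶g₁(e), g₂(r▶l) = g₀(r)▶g₂(l), and g₂({e⊗e'}) = {g₁(e)⊗g₁(e')}. -/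

import Mathlib

/-- An action of a commutative `k`-algebra `R` on a commutative `k`-algebra `M`:
a `k`-bilinear map satisfying `r▶(mm') = (r▶m)m' = m(r▶m')` and `(rr')▶m = r▶(r'▶m)`. -/
structure AlgAction (k R M : Type*) [CommRing k] [CommRing R] [CommRing M]
    [Algebra k R] [Algebra k M] where
  act : R →ₗ[k] M →ₗ[k] M
  a1 : ∀ (r : R) (m m' : M), act r (m * m') = act r m * m'
  a1' : ∀ (r : R) (m m' : M), act r (m * m') = m * act r m'
  a2 : ∀ (r r' : R) (m : M), act (r * r') m = act r (act r' m)

/-- A 2-crossed module of commutative `k`-algebras, with Peiffer lifting `lift e e' = {e ⊗ e'}`.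
The action `e ▶' l` of `E` on `L` is `lift e (d2 l)` (axiom 2XM5 is definitional). -/
structure TwoCrossedModule (k L E R : Type*) [CommRing k] [CommRing L] [CommRing E] [CommRing R]
    [Algebra k L] [Algebra k E] [Algebra k R] where
  actE : AlgAction k R E
  actL : AlgAction k R L
  d2 : L →ₗ[k] E
  d1 : E →ₗ[k] R
  d2_mul : ∀ l l' : L, d2 (l * l') = d2 l * d2 l'
  d1_mul : ∀ e e' : E, d1 (e * e') = d1 e * d1 e'
  comp : ∀ l : L, d1 (d2 l) = 0
  d1_act : ∀ (r : R) (e : E), d1 (actE.act r e) = r * d1 e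
  d2_act : ∀ (r : R) (l : L), d2 (actL.act r l) = actE.act r (d2 l)
  lift : E →ₗ[k] E →ₗ[k] L
  axm1 : ∀ e e' : E, d2 (lift e e') = e * e' - actE.act (d1 e') e
  axm2 : ∀ l l' : L, lift (d2 l) (d2 l') = l * l'
  axm3 : ∀ e e' e'' : E, lift e (e' * e'') = lift (e * e') e'' + actL.act (d1 e'') (lift e e')
  axm4 : ∀ (l : L) (e : E), lift (d2 l) e = lift e (d2 l) - actL.act (d1 e) l
  axm6a : ∀ (r : R) (e e' : E), actL.act r (lift e e') = lift (actE.act r e) e'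
  axm6b : ∀ (r : R) (e e' : E), actL.act r (lift e e') = lift e (actE.act r e')

/-- A morphism of 2-crossed modules of commutative `k`-algebras. -/
structure TCMHom {k L E R L' E' R' : Type*} [CommRing k] [CommRing L] [CommRing E] [CommRing R]
    [CommRing L'] [CommRing E'] [CommRing R']
    [Algebra k L] [Algebra k E] [Algebra k R] [Algebra k L'] [Algebra k E'] [Algebra k R']
    (T : TwoCrossedModule k L E R) (T' : TwoCrossedModule k L' E' R') where
  f0 : R →ₗ[k] R'
  f1 : E →ₗ[k] E'
  f2 : L →ₗ[k] L'
  f0_mul : ∀ r r', f0 (r * r') = f0 r * f0 r'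
  f1_mul : ∀ e e', f1 (e * e') = f1 e * f1 e'
  f2_mul : ∀ l l', f2 (l * l') = f2 l * f2 l'
  comm1 : ∀ e, f0 (T.d1 e) = T'.d1 (f1 e)
  comm2 : ∀ l, f1 (T.d2 l) = T'.d2 (f2 l)
  hactE : ∀ r e, f1 (T.actE.act r e) = T'.actE.act (f0 r) (f1 e)
  hactL : ∀ r l, f2 (T.actL.act r l) = T'.actL.act (f0 r) (f2 l)
  hlift : ∀ e e', f2 (T.lift e e') = T'.lift (f1 e) (f1 e')

/-- `(s,t)` is a quadratic `f`-derivation (Definition of the paper), where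
`e ▶' l = lift e (d2 l)`. -/
def IsQuadDeriv {k L E R L' E' R' : Type*} [CommRing k] [CommRing L] [CommRing E] [CommRing R]
    [CommRing L'] [CommRing E'] [CommRing R']
    [Algebra k L] [Algebra k E] [Algebra k R] [Algebra k L'] [Algebra k E'] [Algebra k R']
    {T : TwoCrossedModule k L E R} {T' : TwoCrossedModule k L' E' R'}
    (f : TCMHom T T') (s : R →ₗ[k] E') (t : E →ₗ[k] L') : Prop :=
  (∀ r r', s (r * r') = T'.actE.act (f.f0 r) (s r') + T'.actE.act (f.f0 r') (s r)
      + s r * s r') ∧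
  (∀ e e', t (e * e') = T'.lift (s (T.d1 e)) (f.f1 e') + T'.lift (s (T.d1 e')) (f.f1 e)
      + T'.lift (f.f1 e) (T'.d2 (t e')) + T'.lift (f.f1 e') (T'.d2 (t e))
      + T'.lift (s (T.d1 e)) (T'.d2 (t e')) + T'.lift (s (T.d1 e')) (T'.d2 (t e))
      + t e * t e') ∧
  (∀ r e, t (T.actE.act r e) = T'.actL.act (f.f0 r) (t e) + T'.actL.act (T'.d1 (s r)) (t e)
      + T'.lift (s r) (f.f1 e) - T'.lift (f.f1 e) (s r) - T'.lift (s (T.d1 e)) (s r))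

/-- `(s,t)` connects `f` to `g`:
`g₀ = f₀ + ∂₁'∘s`, `g₁ = f₁ + s∘∂₁ + ∂₂'∘t`, `g₂ = f₂ + t∘∂₂`. -/
def QConnects {k L E R L' E' R' : Type*} [CommRing k] [CommRing L] [CommRing E] [CommRing R]
    [CommRing L'] [CommRing E'] [CommRing R']
    [Algebra k L] [Algebra k E] [Algebra k R] [Algebra k L'] [Algebra k E'] [Algebra k R']
    {T : TwoCrossedModule k L E R} {T' : TwoCrossedModule k L' E' R'}
    (f g : TCMHom T T') (s : R →ₗ[k] E') (t : E →ₗ[k] L') : Prop :=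
  (∀ r, g.f0 r = f.f0 r + T'.d1 (s r)) ∧
  (∀ e, g.f1 e = f.f1 e + s (T.d1 e) + T'.d2 (t e)) ∧
  (∀ l, g.f2 l = f.f2 l + t (T.d2 l))

/-! Each morphism axiom for `g` is checked by expanding both sides: `f` supplies the axiom up to
correction terms, the defining identities of `(s,t)` supply exactly those terms, and what remains
matches after rewriting with `∂₁'∂₂' = 0`, `∂₂'{e ⊗ e'} = ee' − ∂₁'(e')▶e` (2XM1),
`{∂₂'l ⊗ ∂₂'l'} = ll'` (2XM2) and `{∂₂'l ⊗ e} = {e ⊗ ∂₂'l} − ∂₁'(e)▶l` (2XM4). -/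

namespace IsQuadDeriv

variable {k L E R L' E' R' : Type*} [CommRing k] [CommRing L] [CommRing E] [CommRing R]
  [CommRing L'] [CommRing E'] [CommRing R']
  [Algebra k L] [Algebra k E] [Algebra k R] [Algebra k L'] [Algebra k E'] [Algebra k R']
  {T : TwoCrossedModule k L E R} {T' : TwoCrossedModule k L' E' R'}
  {f : TCMHom T T'} {s : R →ₗ[k] E'} {t : E →ₗ[k] L'}

theorem map_mul_s (hq : IsQuadDeriv f s t) (r r' : R) :
    s (r * r') = T'.actE.act (f.f0 r) (s r') + T'.actE.act (f.f0 r') (s r) + s r * s r' :=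
  hq.1 r r'

theorem map_mul_t (hq : IsQuadDeriv f s t) (e e' : E) :
    t (e * e') = T'.lift (s (T.d1 e)) (f.f1 e') + T'.lift (s (T.d1 e')) (f.f1 e)
      + T'.lift (f.f1 e) (T'.d2 (t e')) + T'.lift (f.f1 e') (T'.d2 (t e))
      + T'.lift (s (T.d1 e)) (T'.d2 (t e')) + T'.lift (s (T.d1 e')) (T'.d2 (t e))
      + t e * t e' :=
  hq.2.1 e e'

theorem map_act_t (hq : IsQuadDeriv f s t) (r : R) (e : E) :
    t (T.actE.act r e) = T'.actL.act (f.f0 r) (t e) + T'.actL.act (T'.d1 (s r)) (t e)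
      + T'.lift (s r) (f.f1 e) - T'.lift (f.f1 e) (s r) - T'.lift (s (T.d1 e)) (s r) :=
  hq.2.2 r e

end IsQuadDeriv

namespace TCMHom

variable {k L E R L' E' R' : Type*} [CommRing k] [CommRing L] [CommRing E] [CommRing R]
  [CommRing L'] [CommRing E'] [CommRing R']
  [Algebra k L] [Algebra k E] [Algebra k R] [Algebra k L'] [Algebra k E'] [Algebra k R']
  {T : TwoCrossedModule k L E R} {T' : TwoCrossedModule k L' E' R'}
  (f : TCMHom T T') (s : R →ₗ[k] E') (t : E →ₗ[k] L')

def twist0 : R →ₗ[k] R' := f.f0 + T'.d1 ∘ₗ s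

def twist1 : E →ₗ[k] E' := f.f1 + s ∘ₗ T.d1 + T'.d2 ∘ₗ t

def twist2 : L →ₗ[k] L' := f.f2 + t ∘ₗ T.d2

@[simp]
theorem twist0_apply (r : R) : f.twist0 s r = f.f0 r + T'.d1 (s r) := rfl

@[simp]
theorem twist1_apply (e : E) : f.twist1 s t e = f.f1 e + s (T.d1 e) + T'.d2 (t e) := rfl

@[simp]
theorem twist2_apply (l : L) : f.twist2 t l = f.f2 l + t (T.d2 l) := rfl

theorem d1_twist1 (e : E) : f.twist0 s (T.d1 e) = T'.d1 (f.twist1 s t e) := by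
  simp only [twist0_apply, twist1_apply, map_add, f.comm1, T'.comp]
  abel

theorem twist1_d2 (l : L) : f.twist1 s t (T.d2 l) = T'.d2 (f.twist2 t l) := by
  simp only [twist1_apply, twist2_apply, map_add, T.comp, map_zero, f.comm2]
  abel

variable {f s t}

theorem twist0_mul (hq : IsQuadDeriv f s t) (r r' : R) :
    f.twist0 s (r * r') = f.twist0 s r * f.twist0 s r' := by
  simp only [twist0_apply, f.f0_mul, hq.map_mul_s, map_add, T'.d1_act, T'.d1_mul]
  ring

theorem twist1_mul (hq : IsQuadDeriv f s t) (e e' : E) :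
    f.twist1 s t (e * e') = f.twist1 s t e * f.twist1 s t e' := by
  simp only [twist1_apply, f.f1_mul, T.d1_mul, hq.map_mul_s, hq.map_mul_t, map_add, T'.axm1,
    T'.d2_mul, T'.comp, map_zero, LinearMap.zero_apply, f.comm1]
  ring

theorem twist2_mul (hq : IsQuadDeriv f s t) (l l' : L) :
    f.twist2 t (l * l') = f.twist2 t l * f.twist2 t l' := by
  simp only [twist2_apply, f.f2_mul, T.d2_mul, hq.map_mul_t, T.comp, map_zero,
    LinearMap.zero_apply, f.comm2, T'.axm2]
  ring

theorem twist1_act (hq : IsQuadDeriv f s t) (r : R) (e : E) :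
    f.twist1 s t (T.actE.act r e) = T'.actE.act (f.twist0 s r) (f.twist1 s t e) := by
  simp only [twist0_apply, twist1_apply, f.hactE, T.d1_act, hq.map_mul_s, hq.map_act_t,
    map_add, map_sub, T'.d2_act, T'.axm1, LinearMap.add_apply, f.comm1]
  ring

theorem twist2_act (hq : IsQuadDeriv f s t) (r : R) (l : L) :
    f.twist2 t (T.actL.act r l) = T'.actL.act (f.twist0 s r) (f.twist2 t l) := by
  simp only [twist0_apply, twist2_apply, f.hactL, T.d2_act, hq.map_act_t, T.comp, map_zero,
    LinearMap.zero_apply, f.comm2, T'.axm4, map_add, LinearMap.add_apply]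
  ring

theorem twist2_lift (hq : IsQuadDeriv f s t) (e e' : E) :
    f.twist2 t (T.lift e e') = T'.lift (f.twist1 s t e) (f.twist1 s t e') := by
  simp only [twist1_apply, twist2_apply, f.hlift, T.axm1, map_sub, hq.map_mul_t,
    hq.map_act_t, map_add, LinearMap.add_apply, T'.axm2, T'.axm4, f.comm1]
  ring

def ofQuadDeriv (hq : IsQuadDeriv f s t) : TCMHom T T' where
  f0 := f.twist0 s
  f1 := f.twist1 s t
  f2 := f.twist2 t
  f0_mul := twist0_mul hq
  f1_mul := twist1_mul hq
  f2_mul := twist2_mul hq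
  comm1 := f.d1_twist1 s t
  comm2 := f.twist1_d2 s t
  hactE := twist1_act hq
  hactL := twist2_act hq
  hlift := twist2_lift hq

end TCMHom

/-- if `(s,t)` is a quadratic `f`-derivation then
`g₀ = f₀ + ∂₁'∘s`, `g₁ = f₁ + s∘∂₁ + ∂₂'∘t`, `g₂ = f₂ + t∘∂₂` is a
2-crossed module morphism. -/
theorem stmt17 (k L E R L2 E2 R2 : Type*) [CommRing k] [CommRing L] [CommRing E] [CommRing R]
    [CommRing L2] [CommRing E2] [CommRing R2]
    [Algebra k L] [Algebra k E] [Algebra k R] [Algebra k L2] [Algebra k E2] [Algebra k R2]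
    (T : TwoCrossedModule k L E R) (T2 : TwoCrossedModule k L2 E2 R2)
    (f : TCMHom T T2) (s : R →ₗ[k] E2) (t : E →ₗ[k] L2) (hq : IsQuadDeriv f s t) :
    ∃ g : TCMHom T T2, QConnects f g s t := by
  exact ⟨TCMHom.ofQuadDeriv hq, fun _ => rfl, fun _ => rfl, fun _ => rfl⟩
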